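/- Let H be a Hopf algebra with antipode τ over a field k and A a left H-module algebra. The map a ⊗ b ⋈ h ↦ a ⊙ h₍₁₎ ⊙ (h₍₂₎▷b) is an algebra isomorphism from A^e ⋈ H (multiplication (a⊗b⋈h)(c⊗d⋈k) = a(h₍₁₎▷c) ⊗ d(τ(k₍₂₎)▷b) ⋈ h₍₂₎k₍₁₎) to A ⊙ H ⊙ A (multiplication (a⊙h⊙b)(c⊙k⊙d) = a(h₍₁₎▷c) ⊙ h₍₂₎k ⊙ (h₍₃₎▷d)b), with inverse a ⊙ h ⊙ b ↦ a ⊗ (τ(h₍₂₎)▷b) ⋈ h₍₁₎. -/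

import Mathlib

/-!
Write `ψ (h ⊗ b) = h₁ ⊗ h₂ ▷ b`, so that `Ψ (a ⊗ b ⋈ h) = a ⊗ ψ (h ⊗ b)`; the map
`h ⊗ b ↦ h₁ ⊗ τ(h₂) ▷ b` inside `Φ` is a two-sided inverse of `ψ` by coassociativity, the antipode
axioms and counitality.

For multiplicativity let `H` act diagonally on `H ⊗ A` by `h • (g ⊗ e) = h₁g ⊗ h₂ ▷ e`, so that
`ψ (hg ⊗ e) = h • ψ (g ⊗ e)`. The module-algebra axiom makes `ψ` conjugate left multiplication by
`d` on the `A` factor into `g ⊗ e ↦ g₁ ⊗ (g₂ ▷ d) e`; applied to `ψ⁻¹ (g ⊗ b) = g₁ ⊗ τ(g₂) ▷ b`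
this gives `∑ ψ (g₁ ⊗ d (τ(g₂) ▷ b)) = ψ (g ⊗ d) · b`, where `· b` multiplies the `A` factor on
the right. Hence `Ψ` of the product in `A^e ⋈ H` is `∑ a (h₁ ▷ c) ⊗ h₂ • (ψ (g ⊗ d) · b)`.
Pulling `· b` out of the diagonal action, `h • (T · b) = ∑ (h₁ • T) · (h₂ ▷ b)`, and one more use
of coassociativity turn this into the product in `A ⊙ H ⊙ A` of `Ψ (a ⊗ b ⋈ h)` and
`Ψ (c ⊗ d ⋈ g)`.
-/

open scoped TensorProduct
open Coalgebra HopfAlgebra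

noncomputable section

variable (k H A : Type*) [Field k] [Ring H] [HopfAlgebra k H] [Ring A] [Algebra k A]

variable (act : H →ₗ[k] A →ₗ[k] A)

/-- `h ⊗ b ↦ h₍₁₎ ⊗ (h₍₂₎ ▷ b)`. -/
def innerPsi : H ⊗[k] A →ₗ[k] H ⊗[k] A :=
  (LinearMap.lTensor H (TensorProduct.lift act)).comp
    (((TensorProduct.assoc k H H A).toLinearMap).comp
      (LinearMap.rTensor A (Coalgebra.comul (R := k) (A := H))))

/-- `Ψ : a ⊗ b ⋈ h ↦ a ⊙ h₍₁₎ ⊙ (h₍₂₎ ▷ b)`, as a map `A⊗A⊗H → A⊗H⊗A`. -/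
def PsiMap : A ⊗[k] (A ⊗[k] H) →ₗ[k] A ⊗[k] (H ⊗[k] A) :=
  (LinearMap.lTensor A (innerPsi k H A act)).comp
    (LinearMap.lTensor A ((TensorProduct.comm k A H).toLinearMap))

/-- `h ⊗ b ↦ (τ(h₍₂₎) ▷ b) ⊗ h₍₁₎`. -/
def innerPhi : H ⊗[k] A →ₗ[k] A ⊗[k] H :=
  (LinearMap.rTensor H (TensorProduct.lift act)).comp
    (((TensorProduct.assoc k H A H).symm.toLinearMap).comp
      ((LinearMap.lTensor H ((TensorProduct.comm k H A).toLinearMap)).comp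
        (((TensorProduct.assoc k H H A).toLinearMap).comp
          ((LinearMap.rTensor A (LinearMap.rTensor H (antipode (R := k)))).comp
            ((LinearMap.rTensor A ((TensorProduct.comm k H H).toLinearMap)).comp
              (LinearMap.rTensor A (Coalgebra.comul (R := k) (A := H))))))))

/-- The inverse map `a ⊙ h ⊙ b ↦ a ⊗ (τ(h₍₂₎) ▷ b) ⋈ h₍₁₎`. -/
def PhiMap : A ⊗[k] (H ⊗[k] A) →ₗ[k] A ⊗[k] (A ⊗[k] H) :=
  LinearMap.lTensor A (innerPhi k H A act)


namespace TensorProduct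

variable {R M N P : Type*} [CommSemiring R] [AddCommMonoid M] [AddCommMonoid N]
  [AddCommMonoid P] [Module R M] [Module R N] [Module R P]

lemma exists_sum_tmul_tmul_eq (x : M ⊗[R] (N ⊗[R] P)) :
    ∃ (n : ℕ) (f : Fin n → M) (g : Fin n → N) (h : Fin n → P),
      x = ∑ i, f i ⊗ₜ[R] (g i ⊗ₜ[R] h i) := by
  induction x with
  | zero => exact ⟨0, finZeroElim, finZeroElim, finZeroElim, by simp⟩
  | tmul m y =>
    obtain ⟨n, g, h, rfl⟩ := exists_sum_tmul_eq y
    exact ⟨n, fun _ ↦ m, g, h, by simp [tmul_sum]⟩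
  | add x y hx hy =>
    obtain ⟨nx, fx, gx, hx, rfl⟩ := hx
    obtain ⟨ny, fy, gy, hy, rfl⟩ := hy
    exact ⟨nx + ny, Fin.addCases fx fy, Fin.addCases gx gy, Fin.addCases hx hy,
      by simp [Fin.sum_univ_add]⟩

end TensorProduct

namespace Coalgebra

variable {R C M : Type*} [CommSemiring R] [AddCommMonoid C] [Module R C] [Coalgebra R C]
  [AddCommMonoid M] [Module R M] {c : C} {ι κ ν : Type*}

lemma sum_sum_apply_tmul_tmul_eq (F : C ⊗[R] (C ⊗[R] C) →ₗ[R] M) (r : Repr R c ι)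
    (r₁ : (i : ι) → Repr R (r.left i) κ) (r₂ : (i : ι) → Repr R (r.right i) ν) :
    ∑ i ∈ r.index, ∑ j ∈ (r₁ i).index, F ((r₁ i).left j ⊗ₜ ((r₁ i).right j ⊗ₜ r.right i)) =
      ∑ i ∈ r.index, ∑ j ∈ (r₂ i).index, F (r.left i ⊗ₜ ((r₂ i).left j ⊗ₜ (r₂ i).right j)) := by
  simpa only [map_sum] using congr(F $(sum_tmul_tmul_eq r r₁ r₂))

lemma sum_smul_counit_eq (r : Repr R c ι) :
    ∑ i ∈ r.index, counit (R := R) (r.right i) • r.left i = c := by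
  simpa only [map_sum, TensorProduct.rid_tmul, one_smul]
    using congr(TensorProduct.rid R R C $(sum_tmul_counit_eq r))

end Coalgebra

namespace HopfAlgebra

variable {R C : Type*} [CommSemiring R] [Semiring C] [HopfAlgebra R C] {c : C} {ι κ : Type*}

lemma sum_sum_tmul_antipode_mul_eq (r : Repr R c ι) (r₁ : (i : ι) → Repr R (r.left i) κ) :
    ∑ i ∈ r.index, ∑ j ∈ (r₁ i).index,
      (r₁ i).left j ⊗ₜ[R] (antipode R ((r₁ i).right j) * r.right i) = c ⊗ₜ 1 := by
  have h := sum_sum_apply_tmul_tmul_eq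
    (LinearMap.lTensor C (LinearMap.mul' R C ∘ₗ LinearMap.rTensor C (antipode R)))
    r r₁ fun i ↦ ℛ R (r.right i)
  simp only [LinearMap.lTensor_tmul, LinearMap.comp_apply, LinearMap.rTensor_tmul,
    LinearMap.mul'_apply, ← TensorProduct.tmul_sum, sum_antipode_mul_eq_smul] at h
  simp only [h, TensorProduct.tmul_smul, TensorProduct.smul_tmul', ← TensorProduct.sum_tmul,
    sum_smul_counit_eq]

lemma sum_sum_tmul_mul_antipode_eq (r : Repr R c ι) (r₁ : (i : ι) → Repr R (r.left i) κ) :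
    ∑ i ∈ r.index, ∑ j ∈ (r₁ i).index,
      (r₁ i).left j ⊗ₜ[R] ((r₁ i).right j * antipode R (r.right i)) = c ⊗ₜ 1 := by
  have h := sum_sum_apply_tmul_tmul_eq
    (LinearMap.lTensor C (LinearMap.mul' R C ∘ₗ LinearMap.lTensor C (antipode R)))
    r r₁ fun i ↦ ℛ R (r.right i)
  simp only [LinearMap.lTensor_tmul, LinearMap.comp_apply,
    LinearMap.mul'_apply, ← TensorProduct.tmul_sum, sum_mul_antipode_eq_smul] at h
  simp only [h, TensorProduct.tmul_smul, TensorProduct.smul_tmul', ← TensorProduct.sum_tmul,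
    sum_smul_counit_eq]

end HopfAlgebra

section ModuleAlgebra

variable {k H A} {ι : Type*}

lemma act_mul_eq_sum
    (hma : (TensorProduct.lift act).comp (LinearMap.lTensor H (LinearMap.mul' k A)) =
      (LinearMap.mul' k A).comp
        ((TensorProduct.map (TensorProduct.lift act) (TensorProduct.lift act)).comp
          (((TensorProduct.tensorTensorTensorComm k H H A A).toLinearMap).comp
            (LinearMap.rTensor (A ⊗[k] A) (Coalgebra.comul (R := k) (A := H))))))
    {h : H} (r : Repr k h ι) (x y : A) :
    act h (x * y) = ∑ i ∈ r.index, act (r.left i) x * act (r.right i) y := by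
  simpa [← r.eq, TensorProduct.sum_tmul] using congr($hma (h ⊗ₜ (x ⊗ₜ y)))

lemma innerPsi_tmul {h : H} (r : Repr k h ι) (b : A) :
    innerPsi k H A act (h ⊗ₜ b) = ∑ i ∈ r.index, r.left i ⊗ₜ act (r.right i) b := by
  simp [innerPsi, ← r.eq, TensorProduct.sum_tmul]

lemma innerPhi_tmul {h : H} (r : Repr k h ι) (b : A) :
    innerPhi k H A act (h ⊗ₜ b) =
      ∑ i ∈ r.index, act (antipode k (r.right i)) b ⊗ₜ r.left i := by
  simp [innerPhi, ← r.eq, TensorProduct.sum_tmul]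

lemma innerPhi_innerPsi (hact_one : ∀ a : A, act 1 a = a)
    (hact_mul : ∀ (h g : H) (a : A), act (h * g) a = act h (act g a)) (h : H) (b : A) :
    innerPhi k H A act (innerPsi k H A act (h ⊗ₜ b)) = b ⊗ₜ h := by
  have key := congr((LinearMap.rTensor H (act.flip b) ∘ₗ (TensorProduct.comm k H H).toLinearMap)
    $(HopfAlgebra.sum_sum_tmul_antipode_mul_eq (ℛ k h) fun i ↦ ℛ k ((ℛ k h).left i)))
  simp only [map_sum, LinearMap.comp_apply, LinearEquiv.coe_coe, TensorProduct.comm_tmul,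
    LinearMap.rTensor_tmul, LinearMap.flip_apply, hact_one] at key
  simp only [innerPsi_tmul act (ℛ k h), map_sum, innerPhi_tmul act (ℛ k _), ← hact_mul, key]

lemma innerPsi_comm_innerPhi (hact_one : ∀ a : A, act 1 a = a)
    (hact_mul : ∀ (h g : H) (a : A), act (h * g) a = act h (act g a)) (h : H) (b : A) :
    innerPsi k H A act (TensorProduct.comm k A H (innerPhi k H A act (h ⊗ₜ b))) = h ⊗ₜ b := by
  have key := congr(LinearMap.lTensor H (act.flip b)
    $(HopfAlgebra.sum_sum_tmul_mul_antipode_eq (ℛ k h) fun i ↦ ℛ k ((ℛ k h).left i)))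
  simp only [map_sum, LinearMap.lTensor_tmul, LinearMap.flip_apply, hact_one] at key
  simp only [innerPhi_tmul act (ℛ k h), map_sum, TensorProduct.comm_tmul,
    innerPsi_tmul act (ℛ k _), ← hact_mul, key]

lemma PsiMap_tmul (a b : A) (h : H) :
    PsiMap k H A act (a ⊗ₜ (b ⊗ₜ h)) = a ⊗ₜ innerPsi k H A act (h ⊗ₜ b) := rfl

lemma PhiMap_comp_PsiMap (hact_one : ∀ a : A, act 1 a = a)
    (hact_mul : ∀ (h g : H) (a : A), act (h * g) a = act h (act g a)) :
    (PhiMap k H A act).comp (PsiMap k H A act) = LinearMap.id := by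
  have inner : innerPhi k H A act ∘ₗ innerPsi k H A act ∘ₗ (TensorProduct.comm k A H).toLinearMap =
      LinearMap.id :=
    TensorProduct.ext' fun b h ↦ innerPhi_innerPsi act hact_one hact_mul h b
  rw [PhiMap, PsiMap, ← LinearMap.lTensor_comp, ← LinearMap.lTensor_comp, inner,
    LinearMap.lTensor_id]

lemma PsiMap_comp_PhiMap (hact_one : ∀ a : A, act 1 a = a)
    (hact_mul : ∀ (h g : H) (a : A), act (h * g) a = act h (act g a)) :
    (PsiMap k H A act).comp (PhiMap k H A act) = LinearMap.id := by
  have inner : innerPsi k H A act ∘ₗ (TensorProduct.comm k A H).toLinearMap ∘ₗ innerPhi k H A act =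
      LinearMap.id :=
    TensorProduct.ext' fun h b ↦ innerPsi_comm_innerPhi act hact_one hact_mul h b
  rw [PhiMap, PsiMap, LinearMap.comp_assoc, ← LinearMap.lTensor_comp, ← LinearMap.lTensor_comp,
    inner, LinearMap.lTensor_id]

lemma PsiMap_one (hact_one : ∀ a : A, act 1 a = a) :
    PsiMap k H A act (1 ⊗ₜ (1 ⊗ₜ 1)) = 1 ⊗ₜ (1 ⊗ₜ 1) := by
  simp [PsiMap_tmul, innerPsi, Bialgebra.comul_one, Algebra.TensorProduct.one_def, hact_one]

def diagAct : H →ₗ[k] (H ⊗[k] A) →ₗ[k] (H ⊗[k] A) :=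
  TensorProduct.lift
    ((TensorProduct.mapBilinear (RingHom.id k) H A H A).compl₁₂ (LinearMap.mul k H) act) ∘ₗ comul

lemma diagAct_tmul {h : H} (r : Repr k h ι) (g : H) (e : A) :
    diagAct act h (g ⊗ₜ e) = ∑ i ∈ r.index, (r.left i * g) ⊗ₜ act (r.right i) e := by
  simp [diagAct, ← r.eq]

lemma innerPsi_mul_tmul (hact_mul : ∀ (h g : H) (a : A), act (h * g) a = act h (act g a))
    (h g : H) (e : A) :
    innerPsi k H A act ((h * g) ⊗ₜ e) = diagAct act h (innerPsi k H A act (g ⊗ₜ e)) := by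
  rw [innerPsi_tmul act ((ℛ k h).mul (ℛ k g)), innerPsi_tmul act (ℛ k g), map_sum]
  simp only [diagAct_tmul act (ℛ k h), Repr.mul_index, Repr.mul_left, Repr.mul_right, hact_mul,
    Finset.sum_product]
  exact Finset.sum_comm

def twistedMulLeft (d : A) : H ⊗[k] A →ₗ[k] H ⊗[k] A :=
  TensorProduct.lift ((LinearMap.lTensorHom H ∘ₗ (LinearMap.mul k A).flip).flip ∘ₗ
    innerPsi k H A act ∘ₗ (TensorProduct.mk k H A).flip d)

lemma twistedMulLeft_tmul (d : A) (g : H) (e : A) :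
    twistedMulLeft act d (g ⊗ₜ e) =
      LinearMap.lTensor H (LinearMap.mulRight k e) (innerPsi k H A act (g ⊗ₜ d)) :=
  rfl

lemma innerPsi_lTensor_mulLeft
    (hmul : ∀ (h : H) (x y : A),
      act h (x * y) = ∑ i ∈ (ℛ k h).index, act ((ℛ k h).left i) x * act ((ℛ k h).right i) y)
    (d : A) (T : H ⊗[k] A) :
    innerPsi k H A act (LinearMap.lTensor H (LinearMap.mulLeft k d) T) =
      twistedMulLeft act d (innerPsi k H A act T) := by
  induction T using TensorProduct.induction_on with
  | zero => simp
  | add T₁ T₂ h₁ h₂ => simp only [map_add, h₁, h₂]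
  | tmul g e =>
    have coassoc := sum_sum_apply_tmul_tmul_eq
      (LinearMap.lTensor H (LinearMap.mul' k A ∘ₗ TensorProduct.map (act.flip d) (act.flip e)))
      (ℛ k g) (fun i ↦ ℛ k _) (fun i ↦ ℛ k _)
    simp only [LinearMap.lTensor_tmul, LinearMap.comp_apply, TensorProduct.map_tmul,
      LinearMap.flip_apply, LinearMap.mul'_apply] at coassoc
    simp only [LinearMap.lTensor_tmul, LinearMap.mulLeft_apply, innerPsi_tmul act (ℛ k g),
      map_sum, twistedMulLeft_tmul, innerPsi_tmul act (ℛ k _), hmul,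
      TensorProduct.tmul_sum, LinearMap.mulRight_apply, coassoc]

lemma sum_innerPsi_tmul_mul_act_antipode (hact_one : ∀ a : A, act 1 a = a)
    (hact_mul : ∀ (h g : H) (a : A), act (h * g) a = act h (act g a))
    (hmul : ∀ (h : H) (x y : A),
      act h (x * y) = ∑ i ∈ (ℛ k h).index, act ((ℛ k h).left i) x * act ((ℛ k h).right i) y)
    {g : H} (r : Repr k g ι) (d b : A) :
    ∑ i ∈ r.index, innerPsi k H A act (r.left i ⊗ₜ (d * act (antipode k (r.right i)) b)) =
      LinearMap.lTensor H (LinearMap.mulRight k b) (innerPsi k H A act (g ⊗ₜ d)) := by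
  have key := innerPsi_lTensor_mulLeft act hmul d
    (TensorProduct.comm k A H (innerPhi k H A act (g ⊗ₜ b)))
  rwa [innerPsi_comm_innerPhi act hact_one hact_mul, twistedMulLeft_tmul, innerPhi_tmul act r,
    map_sum, map_sum, map_sum] at key

lemma diagAct_lTensor_mulRight
    (hmul : ∀ (h : H) (x y : A),
      act h (x * y) = ∑ i ∈ (ℛ k h).index, act ((ℛ k h).left i) x * act ((ℛ k h).right i) y)
    {h : H} (r : Repr k h ι) (b : A) (T : H ⊗[k] A) :
    diagAct act h (LinearMap.lTensor H (LinearMap.mulRight k b) T) =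
      ∑ i ∈ r.index, LinearMap.lTensor H (LinearMap.mulRight k (act (r.right i) b))
        (diagAct act (r.left i) T) := by
  induction T using TensorProduct.induction_on with
  | zero => simp
  | add T₁ T₂ h₁ h₂ => simp only [map_add, h₁, h₂, Finset.sum_add_distrib]
  | tmul g e =>
    have coassoc := sum_sum_apply_tmul_tmul_eq
      (TensorProduct.map (LinearMap.mulRight k g)
        (LinearMap.mul' k A ∘ₗ TensorProduct.map (act.flip e) (act.flip b)))
      r (fun i ↦ ℛ k _) (fun i ↦ ℛ k _)
    simp only [TensorProduct.map_tmul, LinearMap.comp_apply, LinearMap.mulRight_apply,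
      LinearMap.flip_apply, LinearMap.mul'_apply] at coassoc
    rw [LinearMap.lTensor_tmul, diagAct_tmul act r]
    simp only [LinearMap.mulRight_apply, hmul, TensorProduct.tmul_sum,
      diagAct_tmul act (ℛ k _), map_sum, LinearMap.lTensor_tmul, coassoc]

lemma mulO_tmul_tmul
    (mulO : (A ⊗[k] (H ⊗[k] A)) →ₗ[k] (A ⊗[k] (H ⊗[k] A)) →ₗ[k] (A ⊗[k] (H ⊗[k] A)))
    (hmulO : ∀ (a b c d : A) (h g : H) (n : ℕ) (h1 h2 h3 : Fin n → H),
      (LinearMap.lTensor H (Coalgebra.comul (R := k) (A := H)))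
          (Coalgebra.comul (R := k) h) =
        ∑ i, h1 i ⊗ₜ[k] (h2 i ⊗ₜ[k] h3 i) →
      mulO (a ⊗ₜ[k] (h ⊗ₜ[k] b)) (c ⊗ₜ[k] (g ⊗ₜ[k] d)) =
        ∑ i, (a * act (h1 i) c) ⊗ₜ[k] ((h2 i * g) ⊗ₜ[k] (act (h3 i) d * b)))
    {h : H} (r : Repr k h ι) (a b c : A) (T : H ⊗[k] A) :
    mulO (a ⊗ₜ (h ⊗ₜ b)) (c ⊗ₜ T) = ∑ i ∈ r.index,
      (a * act (r.left i) c) ⊗ₜ LinearMap.lTensor H (LinearMap.mulRight k b)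
        (diagAct act (r.right i) T) := by
  induction T using TensorProduct.induction_on with
  | zero => simp
  | add T₁ T₂ h₁ h₂ =>
    simp only [TensorProduct.tmul_add, map_add, h₁, h₂, Finset.sum_add_distrib]
  | tmul g d =>
    obtain ⟨n, f₁, f₂, f₃, hf⟩ :=
      TensorProduct.exists_sum_tmul_tmul_eq (LinearMap.lTensor H comul (comul (R := k) h))
    have key := congr(TensorProduct.map (LinearMap.mulLeft k a ∘ₗ act.flip c)
      (TensorProduct.map (LinearMap.mulRight k g) (LinearMap.mulRight k b ∘ₗ act.flip d)) $hf)
    rw [← r.eq] at key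
    simp only [map_sum, LinearMap.lTensor_tmul, ← (ℛ k _).eq, TensorProduct.tmul_sum,
      TensorProduct.map_tmul, LinearMap.comp_apply, LinearMap.mulLeft_apply,
      LinearMap.mulRight_apply, LinearMap.flip_apply] at key
    rw [hmulO a b c d h g n f₁ f₂ f₃ hf, ← key]
    simp only [diagAct_tmul act (ℛ k _), map_sum, LinearMap.lTensor_tmul, LinearMap.mulRight_apply,
      TensorProduct.tmul_sum]

lemma PsiMap_mulS_tmul (hact_one : ∀ a : A, act 1 a = a)
    (hact_mul : ∀ (h g : H) (a : A), act (h * g) a = act h (act g a))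
    (hmul : ∀ (h : H) (x y : A),
      act h (x * y) = ∑ i ∈ (ℛ k h).index, act ((ℛ k h).left i) x * act ((ℛ k h).right i) y)
    (mulS : (A ⊗[k] (A ⊗[k] H)) →ₗ[k] (A ⊗[k] (A ⊗[k] H)) →ₗ[k] (A ⊗[k] (A ⊗[k] H)))
    (hmulS : ∀ (a b c d : A) (h g : H) (n m : ℕ)
      (h1 h2 : Fin n → H) (g1 g2 : Fin m → H),
      Coalgebra.comul (R := k) h = ∑ i, h1 i ⊗ₜ[k] h2 i →
      Coalgebra.comul (R := k) g = ∑ j, g1 j ⊗ₜ[k] g2 j →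
      mulS (a ⊗ₜ[k] (b ⊗ₜ[k] h)) (c ⊗ₜ[k] (d ⊗ₜ[k] g)) =
        ∑ i, ∑ j,
          (a * act (h1 i) c) ⊗ₜ[k]
            ((d * act (antipode (R := k) (g2 j)) b) ⊗ₜ[k] (h2 i * g1 j)))
    (mulO : (A ⊗[k] (H ⊗[k] A)) →ₗ[k] (A ⊗[k] (H ⊗[k] A)) →ₗ[k] (A ⊗[k] (H ⊗[k] A)))
    (hmulO : ∀ (a b c d : A) (h g : H) (n : ℕ) (h1 h2 h3 : Fin n → H),
      (LinearMap.lTensor H (Coalgebra.comul (R := k) (A := H)))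
          (Coalgebra.comul (R := k) h) =
        ∑ i, h1 i ⊗ₜ[k] (h2 i ⊗ₜ[k] h3 i) →
      mulO (a ⊗ₜ[k] (h ⊗ₜ[k] b)) (c ⊗ₜ[k] (g ⊗ₜ[k] d)) =
        ∑ i, (a * act (h1 i) c) ⊗ₜ[k] ((h2 i * g) ⊗ₜ[k] (act (h3 i) d * b)))
    (a b c d : A) (h g : H) :
    PsiMap k H A act (mulS (a ⊗ₜ (b ⊗ₜ h)) (c ⊗ₜ (d ⊗ₜ g))) =
      mulO (PsiMap k H A act (a ⊗ₜ (b ⊗ₜ h))) (PsiMap k H A act (c ⊗ₜ (d ⊗ₜ g))) := by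
  obtain ⟨n, x, x', hx⟩ := TensorProduct.exists_sum_tmul_eq (comul (R := k) h)
  obtain ⟨m, y, y', hy⟩ := TensorProduct.exists_sum_tmul_eq (comul (R := k) g)
  let rh : Repr k h (Fin n) := ⟨Finset.univ, x, x', hx.symm⟩
  let rg : Repr k g (Fin m) := ⟨Finset.univ, y, y', hy.symm⟩
  set T := innerPsi k H A act (g ⊗ₜ d)
  let F := TensorProduct.map (LinearMap.mulLeft k a ∘ₗ act.flip c)
    (TensorProduct.lift ((LinearMap.lTensorHom H ∘ₗ (LinearMap.mul k A).flip ∘ₗ act.flip b).flip ∘ₗ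
      (diagAct act).flip T))
  have hF : ∀ p q s : H, F (p ⊗ₜ (q ⊗ₜ s)) =
      (a * act p c) ⊗ₜ LinearMap.lTensor H (LinearMap.mulRight k (act s b)) (diagAct act q T) :=
    fun p q s ↦ rfl
  calc PsiMap k H A act (mulS (a ⊗ₜ (b ⊗ₜ h)) (c ⊗ₜ (d ⊗ₜ g)))
      = ∑ i, (a * act (x i) c) ⊗ₜ
          diagAct act (x' i) (LinearMap.lTensor H (LinearMap.mulRight k b) T) := by
        rw [hmulS a b c d h g n m x x' y y' hx hy,
          ← sum_innerPsi_tmul_mul_act_antipode act hact_one hact_mul hmul rg]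
        simp only [map_sum, PsiMap_tmul, innerPsi_mul_tmul act hact_mul, TensorProduct.tmul_sum]
        rfl
    _ = ∑ i, ∑ j ∈ (ℛ k (x' i)).index,
          F (x i ⊗ₜ ((ℛ k (x' i)).left j ⊗ₜ (ℛ k (x' i)).right j)) := by
        simp only [hF, diagAct_lTensor_mulRight act hmul (ℛ k _), TensorProduct.tmul_sum]
    _ = ∑ i, ∑ j ∈ (ℛ k (x i)).index, F ((ℛ k (x i)).left j ⊗ₜ ((ℛ k (x i)).right j ⊗ₜ x' i)) :=
        (sum_sum_apply_tmul_tmul_eq F rh (fun i ↦ ℛ k _) (fun i ↦ ℛ k _)).symm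
    _ = mulO (PsiMap k H A act (a ⊗ₜ (b ⊗ₜ h))) (PsiMap k H A act (c ⊗ₜ (d ⊗ₜ g))) := by
        simp only [hF, PsiMap_tmul, innerPsi_tmul act rh, TensorProduct.tmul_sum, map_sum,
          LinearMap.sum_apply, mulO_tmul_tmul act mulO hmulO (ℛ k _)]
        rfl

end ModuleAlgebra

theorem smash_iso
    (hact_one : ∀ a : A, act 1 a = a)
    (hact_mul : ∀ (h g : H) (a : A), act (h * g) a = act h (act g a))
    (hma : (TensorProduct.lift act).comp (LinearMap.lTensor H (LinearMap.mul' k A)) =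
      (LinearMap.mul' k A).comp
        ((TensorProduct.map (TensorProduct.lift act) (TensorProduct.lift act)).comp
          (((TensorProduct.tensorTensorTensorComm k H H A A).toLinearMap).comp
            (LinearMap.rTensor (A ⊗[k] A) (Coalgebra.comul (R := k) (A := H))))))
    -- the multiplication of `A^e ⋈ H`
    (mulS : (A ⊗[k] (A ⊗[k] H)) →ₗ[k] (A ⊗[k] (A ⊗[k] H)) →ₗ[k] (A ⊗[k] (A ⊗[k] H)))
    (hmulS : ∀ (a b c d : A) (h g : H) (n m : ℕ)
      (h1 h2 : Fin n → H) (g1 g2 : Fin m → H),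
      Coalgebra.comul (R := k) h = ∑ i, h1 i ⊗ₜ[k] h2 i →
      Coalgebra.comul (R := k) g = ∑ j, g1 j ⊗ₜ[k] g2 j →
      mulS (a ⊗ₜ[k] (b ⊗ₜ[k] h)) (c ⊗ₜ[k] (d ⊗ₜ[k] g)) =
        ∑ i, ∑ j,
          (a * act (h1 i) c) ⊗ₜ[k]
            ((d * act (antipode (R := k) (g2 j)) b) ⊗ₜ[k] (h2 i * g1 j)))
    -- the multiplication of `A ⊙ H ⊙ A`
    (mulO : (A ⊗[k] (H ⊗[k] A)) →ₗ[k] (A ⊗[k] (H ⊗[k] A)) →ₗ[k] (A ⊗[k] (H ⊗[k] A)))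
    (hmulO : ∀ (a b c d : A) (h g : H) (n : ℕ) (h1 h2 h3 : Fin n → H),
      (LinearMap.lTensor H (Coalgebra.comul (R := k) (A := H)))
          (Coalgebra.comul (R := k) h) =
        ∑ i, h1 i ⊗ₜ[k] (h2 i ⊗ₜ[k] h3 i) →
      mulO (a ⊗ₜ[k] (h ⊗ₜ[k] b)) (c ⊗ₜ[k] (g ⊗ₜ[k] d)) =
        ∑ i, (a * act (h1 i) c) ⊗ₜ[k] ((h2 i * g) ⊗ₜ[k] (act (h3 i) d * b))) :
    -- conclusion: `Ψ` is an algebra isomorphism with inverse `Φ`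
    (PhiMap k H A act).comp (PsiMap k H A act) = LinearMap.id ∧
    (PsiMap k H A act).comp (PhiMap k H A act) = LinearMap.id ∧
    PsiMap k H A act ((1 : A) ⊗ₜ[k] ((1 : A) ⊗ₜ[k] (1 : H))) =
      (1 : A) ⊗ₜ[k] ((1 : H) ⊗ₜ[k] (1 : A)) ∧
    (∀ z w : A ⊗[k] (A ⊗[k] H),
      PsiMap k H A act (mulS z w) =
        mulO (PsiMap k H A act z) (PsiMap k H A act w)) := by
  refine ⟨PhiMap_comp_PsiMap act hact_one hact_mul, PsiMap_comp_PhiMap act hact_one hact_mul,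
    PsiMap_one act hact_one, fun z w ↦ ?_⟩
  have hmul : mulS.compr₂ (PsiMap k H A act) =
      mulO.compl₁₂ (PsiMap k H A act) (PsiMap k H A act) := by
    ext a b h c d g
    exact PsiMap_mulS_tmul act hact_one hact_mul (fun h ↦ act_mul_eq_sum act hma (ℛ k h))
      mulS hmulS mulO hmulO a b c d h g
  exact congr($hmul z w)
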